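/- arXiv:2307.13915 — 2 statements merged into one kernel-verified Lean document; each statement's English description precedes it below -/
import Mathlib

section
/- In any execution of the stack with multiplicity starting from the empty state in which the values pushed by the Push steps are pairwise distinct, no element is lost: at every point of the execution, the multiset of values pushed so far equals the sum of the multiset of values in the current state and the multiset of non-ε values returned by the Pop concurrency classes so far. -/
/-- A step of the stack with multiplicity over `ℕ`: either `push a`, or a `Pop`
concurrency class `pop t r` of size `t` returning value `r` (`none` represents `ε`). -/
inductive MStep : Type
  | push : ℕ → MStep
  | pop : ℕ → Option ℕ → MStep

/-- `StepOk s st s'` : step `st` is a valid transition from state `s` to state `s'`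
(states are finite lists over `ℕ`, the last element being the top of the stack).
`push a` takes `q` to `q ++ [a]`; a `Pop` class of size `t ≥ 1` takes `q ++ [a]` to `q`
returning `a` to each of its `t` `Pop` operations, and leaves the empty state empty,
returning `ε` (i.e. `none`). -/
def StepOk : List ℕ → MStep → List ℕ → Prop
  | s, .push a, s' => s' = s ++ [a]
  | s, .pop t r, s' =>
      1 ≤ t ∧ ((s = [] ∧ s' = [] ∧ r = none) ∨ ∃ q a, s = q ++ [a] ∧ s' = q ∧ r = some a)

/-- `ExecOk s steps s'` : the sequence of steps `steps`, applied starting from state `s`,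
is valid and ends in state `s'`. -/
def ExecOk : List ℕ → List MStep → List ℕ → Prop
  | s, [], s' => s' = s
  | s, st :: rest, s' => ∃ s₁, StepOk s st s₁ ∧ ExecOk s₁ rest s'

/-- The values pushed by the `Push` steps of an execution, in order. -/
def pushedVals (steps : List MStep) : List ℕ :=
  steps.filterMap fun st => match st with | .push a => some a | _ => none

/-- The non-`ε` values returned by the `Pop` concurrency classes of an execution, in order. -/
def popVals (steps : List MStep) : List ℕ :=
  steps.filterMap fun st => match st with | .pop _ (some a) => some a | _ => none

/-- In any execution of the stack with multiplicity starting from the empty state in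
which the values pushed by the `Push` steps are pairwise distinct, no element is lost:
at every point of the execution, the multiset of values pushed so far equals the sum of
the multiset of values in the current state and the multiset of non-`ε` values returned
by the `Pop` concurrency classes so far. -/
theorem stack_no_element_is_lost
    (steps : List MStep) (final : List ℕ) (hexec : ExecOk [] steps final)
    (hdist : (pushedVals steps).Nodup) :
    ∀ pre post s, steps = pre ++ post → ExecOk [] pre s →
      (↑(pushedVals pre) : Multiset ℕ) = (↑s : Multiset ℕ) + ↑(popVals pre) := by
  have key : ∀ (l : List MStep) (s s' : List ℕ), ExecOk s l s' →
      (↑(pushedVals l) : Multiset ℕ) + ↑s = ↑s' + ↑(popVals l) := by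
    intro l
    induction l with
    | nil => intro s s' h; cases h; simp [pushedVals, popVals]
    | cons st rest ih =>
      intro s s' h
      obtain ⟨s₁, hst, hrest⟩ := h
      have hr := ih s₁ s' hrest
      cases st with
      | push a =>
        simp only [StepOk] at hst
        subst hst
        simp only [pushedVals, popVals, List.filterMap_cons] at hr ⊢
        refine Multiset.ext.mpr fun x => ?_
        have h2 := congrArg (Multiset.count x) hr
        simp [Multiset.count_cons, List.count_cons, List.count_append, List.count_singleton] at h2 ⊢
        omega
      | pop t r =>
        simp only [StepOk] at hst
        obtain ⟨-, ⟨hs, hs', hrr⟩ | ⟨q, a, hs, hs', hrr⟩⟩ := hst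
        · subst hs; subst hs'; subst hrr
          simpa [pushedVals, popVals, List.filterMap_cons] using hr
        · subst hs; subst hs'; subst hrr
          simp only [pushedVals, popVals, List.filterMap_cons] at hr ⊢
          refine Multiset.ext.mpr fun x => ?_
          have h2 := congrArg (Multiset.count x) hr
          simp [Multiset.count_cons, List.count_cons, List.count_append, List.count_singleton] at h2 ⊢
          omega
  intro pre post s _ hpre
  have := key pre [] s hpre
  simpa [add_comm] using this
end

section
/- Let L be a list over ℕ × Bool (representing the nodes of SetStackLogic in memory, each node carrying its value and its elimination flag elim), and define the logical state of L as the list of values of its non-eliminated nodes, i.e., (L.filter (fun n => n.2 = false)).map Prod.fst. Suppose the logical state of L equals q ++ [a] for some list q and value a, so L has at least one node with elim flag false, and the last such node has value a. If L' is obtained from L by replacing that last node (a, false) with (a, true) (the logical elimination performed at the linearization point e_elim of a Pop concurrency class), then the logical state of L' equals q. -/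
/-- The logical state of a list `L` of SetStackLogic nodes (value, elim flag):
the list of values of the nodes whose elim flag is `false`, in order. -/
def logicalState (L : List (ℕ × Bool)) : List ℕ :=
  (L.filter (fun n => n.2 = false)).map Prod.fst

/-- Let `L` be the list of nodes of SetStackLogic in memory, with logical state
`q ++ [a]`; so `L` decomposes as `L₁ ++ (a, false) :: L₂` where `(a, false)` is the
last non-eliminated node (every node of `L₂` has elim flag `true`).  If `L'` is
obtained from `L` by replacing that node with `(a, true)` (the logical elimination
performed at the linearization point `e_elim` of a `Pop` concurrency class), then
the logical state of `L'` equals `q`. -/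
theorem logicalState_after_elimination
    (L L' L₁ L₂ : List (ℕ × Bool)) (q : List ℕ) (a : ℕ)
    (hL : L = L₁ ++ (a, false) :: L₂)
    (hlast : ∀ n ∈ L₂, n.2 = true)
    (hstate : logicalState L = q ++ [a])
    (hL' : L' = L₁ ++ (a, true) :: L₂) :
    logicalState L' = q := by
  have h2 : L₂.filter (fun n => !n.2) = [] := by
    rw [List.filter_eq_nil_iff]
    intro n hn
    simp [hlast n hn]
  subst hL hL'
  unfold logicalState at *
  simp [List.filter_append, h2] at hstate ⊢
  exact hstate
end
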